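/- arXiv:1202.6358 — 2 statements merged into one kernel-verified Lean document; each statement's English description precedes it below -/
import Mathlib

section
/- Let R be a Noetherian integral domain and M a finitely generated R-module. If m ∈ M is not a torsion element (i.e. r·m = 0 implies r = 0 for r ∈ R), then there exists an R-linear map f : M → R with f(m) ≠ 0. -/
/-- Let `R` be a Noetherian integral domain and `M` a finitely generated `R`-module.
If `m ∈ M` is not a torsion element, there is an `R`-linear map `f : M → R` with
`f m ≠ 0`. -/
theorem stmt_0 {R : Type*} [CommRing R] [IsDomain R] [IsNoetherianRing R]
    {M : Type*} [AddCommGroup M] [Module R M] [Module.Finite R M]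
    (m : M) (hm : ∀ r : R, r • m = 0 → r = 0) :
    ∃ f : M →ₗ[R] R, f m ≠ 0 := by
  classical
  set S := nonZeroDivisors R with hS
  let K := FractionRing R
  let V := LocalizedModule S M
  let ι : M →ₗ[R] V := LocalizedModule.mkLinearMap S M
  have hfin : Module.Finite K V := Module.Finite.of_isLocalizedModule S ι
  -- `ι m ≠ 0` since `m` is not torsion
  have hv : ι m ≠ 0 := by
    intro h
    obtain ⟨s, hs⟩ := (IsLocalizedModule.eq_zero_iff S ι).mp h
    exact nonZeroDivisors.coe_ne_zero s (hm _ hs)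
  -- find a `K`-linear functional not vanishing on `ι m`
  let B := Module.Free.chooseBasis K V
  have : ∃ i, B.repr (ι m) i ≠ 0 := by
    by_contra h
    push_neg at h
    exact hv (by simpa using (B.repr.map_eq_zero_iff).mp (Finsupp.ext h))
  obtain ⟨i, hi⟩ := this
  let g : V →ₗ[K] K := B.coord i
  have hg : g (ι m) ≠ 0 := hi
  -- the composite `M → K`
  let g' : M →ₗ[R] K := (g.restrictScalars R).comp ι
  have hg' : g' m ≠ 0 := hg
  -- clear denominators using a finite generating set
  obtain ⟨T, hT⟩ := Module.Finite.fg_top (R := R) (M := M)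
  obtain ⟨b, hb⟩ := IsLocalization.exist_integer_multiples S T (fun x => g' x)
  let h : M →ₗ[R] K := (b : R) • g'
  let p : Submodule R K := LinearMap.range (Algebra.linearMap R K)
  have hmem : ∀ x : M, h x ∈ p := by
    intro x
    have hx' : x ∈ Submodule.span R (T : Set M) := by rw [hT]; trivial
    show x ∈ Submodule.comap h p
    refine Submodule.span_le.mpr ?_ hx'
    intro y hy
    obtain ⟨r, hr⟩ := hb y hy
    exact ⟨r, hr⟩
  have halg : Function.Injective (Algebra.linearMap R K) := by
    simpa [Algebra.linearMap] using
      (IsFractionRing.injective R K)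
  let e : R ≃ₗ[R] p := LinearEquiv.ofInjective (Algebra.linearMap R K) halg
  let f : M →ₗ[R] R := (e.symm : p →ₗ[R] R).comp (h.codRestrict p hmem)
  refine ⟨f, fun hf => ?_⟩
  have h1 : h.codRestrict p hmem m = e (f m) := by
    simp [f, LinearEquiv.apply_symm_apply]
  have h2 : h m = 0 := by
    rw [hf] at h1
    have : (h.codRestrict p hmem m : K) = (e 0 : K) := congrArg _ h1
    simpa using this
  have hb0 : (b : R) ≠ 0 := nonZeroDivisors.coe_ne_zero b
  have : (b : R) • g' m = 0 := h2
  rw [Algebra.smul_def, mul_eq_zero] at this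
  rcases this with h3 | h3
  · exact hb0 (IsFractionRing.injective R K (by rw [h3, map_zero]))
  · exact hg' h3
end

section
/- Let R be a Noetherian integral domain, M a finitely generated R-module, and m ∈ M a non-torsion element. Then the set of prime ideals 𝔭 of R such that the image of m in the localization M_𝔭 lies in 𝔭·M_𝔭 is contained in the support of R/I, where I is the image of the evaluation map Hom_R(M,R) → R, f ↦ f(m); in particular I ≠ 0. -/
/-!
A functional `f : M →ₗ[R] R` localizes to `M_𝔭 → R_𝔭` and maps `𝔭 M_𝔭` into `𝔭 R_𝔭`, whose
contraction to `R` is `𝔭`; hence `f m ∈ 𝔭`.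

For `I ≠ 0`: as `m` is non-torsion, its image in `M` localized at the nonzero elements is nonzero,
so some functional over the fraction field `K` does not vanish on it. Restricted to `M` this
functional has finitely generated, hence fractional, range in `K`; clearing a common denominator
gives `f : M →ₗ[R] R` with `f m ≠ 0`.
-/

open LocalizedModule

theorem algebraMap_apply_mem_of_mkLinearMap_mem_map_smul_top {R M : Type*} [CommRing R]
    [AddCommGroup M] [Module R M] (S : Submonoid R) (I : Ideal R) (f : M →ₗ[R] R) {m : M}
    (hm : mkLinearMap S M m ∈ I.map (algebraMap R (Localization S)) •
      (⊤ : Submodule (Localization S) (LocalizedModule S M))) :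
    algebraMap R (Localization S) (f m) ∈ I.map (algebraMap R (Localization S)) := by
  let F : LocalizedModule S M →ₗ[Localization S] Localization S :=
    IsLocalizedModule.mapExtendScalars S (mkLinearMap S M) (Algebra.linearMap R _) _ f
  have hF : F (mkLinearMap S M m) = algebraMap R (Localization S) (f m) :=
    IsLocalizedModule.map_apply S (mkLinearMap S M) (Algebra.linearMap R _) f m
  have hFm : F (mkLinearMap S M m) ∈ I.map (algebraMap R (Localization S)) •
      (⊤ : Submodule (Localization S) (Localization S)) := by
    have := Submodule.mem_map_of_mem (f := F) hm
    rw [Submodule.map_smul''] at this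
    exact Submodule.smul_mono le_rfl le_top this
  rwa [hF, Ideal.smul_eq_mul, Ideal.mul_top] at hFm

theorem apply_mem_of_mkLinearMap_mem_map_smul_top {R M : Type*} [CommRing R]
    [AddCommGroup M] [Module R M] (𝔭 : Ideal R) [𝔭.IsPrime] (f : M →ₗ[R] R) {m : M}
    (hm : mkLinearMap 𝔭.primeCompl M m ∈ 𝔭.map (algebraMap R (Localization.AtPrime 𝔭)) •
      (⊤ : Submodule (Localization.AtPrime 𝔭) (LocalizedModule 𝔭.primeCompl M))) :
    f m ∈ 𝔭 := by
  have := algebraMap_apply_mem_of_mkLinearMap_mem_map_smul_top _ _ f hm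
  rw [Localization.AtPrime.map_eq_maximalIdeal] at this
  exact (IsLocalization.AtPrime.to_map_mem_maximal_iff _ 𝔭 _).mp this

theorem exists_linearMap_fractionRing_apply_ne_zero {R M : Type*} [CommRing R] [IsDomain R]
    [AddCommGroup M] [Module R M] {m : M} (hm : ∀ r : R, r • m = 0 → r = 0) :
    ∃ φ : M →ₗ[R] FractionRing R, φ m ≠ 0 := by
  have hm' : mkLinearMap (nonZeroDivisors R) M m ≠ 0 := by
    rw [Ne, IsLocalizedModule.eq_zero_iff (nonZeroDivisors R)]
    rintro ⟨c, hc⟩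
    exact nonZeroDivisors.coe_ne_zero c (hm c hc)
  obtain ⟨φ, hφ⟩ : ∃ φ : Module.Dual (FractionRing R) (LocalizedModule (nonZeroDivisors R) M),
      φ (mkLinearMap _ M m) ≠ 0 := by
    by_contra! h
    exact hm' ((Module.forall_dual_apply_eq_zero_iff _ _).mp h)
  exact ⟨φ.restrictScalars R ∘ₗ mkLinearMap _ M, hφ⟩

theorem exists_algebraMap_comp_eq_smul {R K M : Type*} [CommRing R] [CommRing K] [Algebra R K]
    (S : Submonoid R) [IsLocalization S K] (hS : S ≤ nonZeroDivisors R)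
    [AddCommGroup M] [Module R M] [Module.Finite R M] (g : M →ₗ[R] K) :
    ∃ b ∈ S, ∃ f : M →ₗ[R] R, ∀ x, algebraMap R K (f x) = b • g x := by
  obtain ⟨b, hbS, hb⟩ := FractionalIdeal.isFractional_of_fg (S := S) (Submodule.fg_range g)
  have hint : ∀ x, (b • g) x ∈ LinearMap.range (Algebra.linearMap R K) := fun x =>
    hb _ (LinearMap.mem_range_self g x)
  let e := LinearEquiv.ofInjective (Algebra.linearMap R K) (IsLocalization.injective K hS)
  refine ⟨b, hbS, e.symm ∘ₗ (b • g).codRestrict _ hint, fun x => ?_⟩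
  exact congrArg Subtype.val (e.apply_symm_apply ⟨(b • g) x, hint x⟩)

theorem exists_linearMap_apply_ne_zero {R M : Type*} [CommRing R] [IsDomain R]
    [AddCommGroup M] [Module R M] [Module.Finite R M] {m : M}
    (hm : ∀ r : R, r • m = 0 → r = 0) : ∃ f : M →ₗ[R] R, f m ≠ 0 := by
  obtain ⟨φ, hφ⟩ := exists_linearMap_fractionRing_apply_ne_zero hm
  obtain ⟨b, hb, f, hf⟩ := exists_algebraMap_comp_eq_smul _ le_rfl φ
  refine ⟨f, fun h => hφ ?_⟩
  have := hf m
  rw [h, map_zero, eq_comm] at this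
  exact (smul_eq_zero.mp this).resolve_left (nonZeroDivisors.coe_ne_zero ⟨b, hb⟩)

theorem stmt_1_general {R : Type*} [CommRing R] [IsDomain R]
    {M : Type*} [AddCommGroup M] [Module R M] [Module.Finite R M]
    (m : M) (hm : ∀ r : R, r • m = 0 → r = 0)
    (I : Ideal R)
    (hI : I = LinearMap.range ((LinearMap.applyₗ : M →ₗ[R] (M →ₗ[R] R) →ₗ[R] R) m)) :
    (∀ (𝔭 : Ideal R) [𝔭.IsPrime],
      (LocalizedModule.mkLinearMap 𝔭.primeCompl M) m ∈
        (Ideal.map (algebraMap R (Localization.AtPrime 𝔭)) 𝔭) •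
          (⊤ : Submodule (Localization.AtPrime 𝔭) (LocalizedModule 𝔭.primeCompl M)) →
      I ≤ 𝔭) ∧ I ≠ ⊥ := by
  subst hI
  refine ⟨fun 𝔭 _ hm𝔭 => ?_, fun hbot => ?_⟩
  · rintro _ ⟨f, rfl⟩
    exact apply_mem_of_mkLinearMap_mem_map_smul_top 𝔭 f hm𝔭
  · obtain ⟨f, hf⟩ := exists_linearMap_apply_ne_zero hm
    exact hf ((Submodule.eq_bot_iff _).mp hbot _ ⟨f, rfl⟩)

/-- Lemma 2.1.6 of the paper: for `R` a Noetherian domain, `M` a finitely generated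
`R`-module and `m ∈ M` nontorsion, every prime `𝔭` with `m ∈ 𝔭 M_𝔭` contains the
ideal `I = { f m : f ∈ Hom_R(M, R) }`; in particular `I ≠ 0`. -/
theorem stmt_1 {R : Type*} [CommRing R] [IsDomain R] [IsNoetherianRing R]
    {M : Type*} [AddCommGroup M] [Module R M] [Module.Finite R M]
    (m : M) (hm : ∀ r : R, r • m = 0 → r = 0)
    (I : Ideal R)
    (hI : I = LinearMap.range ((LinearMap.applyₗ : M →ₗ[R] (M →ₗ[R] R) →ₗ[R] R) m)) :
    (∀ (𝔭 : Ideal R) [𝔭.IsPrime],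
      (LocalizedModule.mkLinearMap 𝔭.primeCompl M) m ∈
        (Ideal.map (algebraMap R (Localization.AtPrime 𝔭)) 𝔭) •
          (⊤ : Submodule (Localization.AtPrime 𝔭) (LocalizedModule 𝔭.primeCompl M)) →
      I ≤ 𝔭) ∧ I ≠ ⊥ :=
  stmt_1_general m hm I hI
end
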